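/- A finite simple graph G is a proper color-line graph if and only if there exists a family Q of cliques of G such that: (a) every vertex of G belongs to at most three members of Q, and every edge of G has both endpoints contained in exactly one member of Q; and (b) letting W be the set of vertices of G belonging to exactly three members of Q, there exists a map v ↦ Q_v from W to Q such that (b1) v ∈ Q_v for every v ∈ W, and (b2) for all u, v ∈ W: if u ∈ Q_v then Q_u = Q_v, and if u ∉ Q_v then Q_u ∩ Q_v = ∅. -/

import Mathlib

/-!
If `G ≅ CL(H, φ)` with `φ` proper, take for `𝒬` the stars of the vertices of `H` together with
the colour classes, and let `Q_v` be the colour class of `v`. A vertex of `G` (an edge of `H`)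
lies in the two stars of its ends and in its colour class; an edge of `G` lies in exactly one
member, since two edges of `H` share at most one end and properness forbids them to share an
end and a colour.

Conversely, the designated cliques `Q_v` (`v ∈ W`) are pairwise disjoint and become the colour
classes, while the remaining members of `𝒬` become vertices of `H`. A vertex of `G` lies in at
most two of the remaining members, so it can be realised as an edge of `H` joining them (padded
by private vertices), coloured by the designated clique through it, or by a private colour.
-/

open SimpleGraph

/-- The color-line graph `CL(H)` of an edge-colored graph `(H, φ)`: vertices are the edges
of `H`, and two distinct edges are adjacent iff they share an endpoint or have equal colors. -/
def colorLineGraph {V C : Type*} (H : SimpleGraph V) (φ : H.edgeSet → C) :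
    SimpleGraph H.edgeSet where
  Adj e f := e ≠ f ∧
    ((∃ v, v ∈ (e : Sym2 V) ∧ v ∈ (f : Sym2 V)) ∨ φ e = φ f)
  symm := by
    constructor
    rintro e f ⟨hne, h⟩
    refine ⟨hne.symm, ?_⟩
    rcases h with ⟨v, hv1, hv2⟩ | h
    · exact Or.inl ⟨v, hv2, hv1⟩
    · exact Or.inr h.symm
  loopless := by constructor; rintro e ⟨hne, -⟩; exact hne rfl

/-- An edge coloring is proper if distinct edges sharing an endpoint get distinct colors. -/
def IsProperEdgeColoring {V C : Type*} (H : SimpleGraph V) (φ : H.edgeSet → C) : Prop :=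
  ∀ e f : H.edgeSet, e ≠ f → (∃ v, v ∈ (e : Sym2 V) ∧ v ∈ (f : Sym2 V)) → φ e ≠ φ f

/-- `G` is a color-line graph: `G ≅ CL(H)` for some finite edge-colored graph `H`. -/
def IsColorLineGraph {α : Type*} (G : SimpleGraph α) : Prop :=
  ∃ (V C : Type) (_ : Fintype V) (H : SimpleGraph V) (φ : H.edgeSet → C),
    Nonempty (G ≃g colorLineGraph H φ)

/-- `G` is a proper color-line graph: `G ≅ CL(H)` for some finite properly
edge-colored graph `H`. -/
def IsProperColorLineGraph {α : Type*} (G : SimpleGraph α) : Prop :=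
  ∃ (V C : Type) (_ : Fintype V) (H : SimpleGraph V) (φ : H.edgeSet → C),
    IsProperEdgeColoring H φ ∧ Nonempty (G ≃g colorLineGraph H φ)

/-- `G` is a `k`-color-line graph: `G ≅ CL(H)` for some finite graph `H`
edge-colored with at most `k` colors. -/
def IsKColorLineGraph (k : ℕ) {α : Type*} (G : SimpleGraph α) : Prop :=
  ∃ (V : Type) (_ : Fintype V) (H : SimpleGraph V) (φ : H.edgeSet → Fin k),
    Nonempty (G ≃g colorLineGraph H φ)

/-- `G` is a proper `k`-color-line graph: `G ≅ CL(H)` for some finite graph `H`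
properly edge-colored with at most `k` colors. -/
def IsProperKColorLineGraph (k : ℕ) {α : Type*} (G : SimpleGraph α) : Prop :=
  ∃ (V : Type) (_ : Fintype V) (H : SimpleGraph V) (φ : H.edgeSet → Fin k),
    IsProperEdgeColoring H φ ∧ Nonempty (G ≃g colorLineGraph H φ)

/-- `G` is a line graph: `G ≅ L(H)` for some finite graph `H`. -/
def IsLineGraph {α : Type*} (G : SimpleGraph α) : Prop :=
  ∃ (V : Type) (_ : Fintype V) (H : SimpleGraph V), Nonempty (G ≃g H.lineGraph)

variable {α : Type} [Fintype α] [DecidableEq α]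

/-- The members of the family `𝒬` containing both endpoints of the edge `e`. -/
def edgeMembers (𝒬 : Finset (Finset α)) (e : Sym2 α) : Finset (Finset α) :=
  𝒬.filter (fun Q => ∀ x ∈ e, x ∈ Q)

/-- The members of the family `𝒬` containing the vertex `v`. -/
def vertMembers (𝒬 : Finset (Finset α)) (v : α) : Finset (Finset α) :=
  𝒬.filter (fun Q => v ∈ Q)

open Finset

theorem Sym2.exists_not_isDiag_of_card_le_two {β : Type*} [DecidableEq β] {s : Finset β}
    (hs : #s ≤ 2) {p q : β} (hpq : p ≠ q) :
    ∃ z : Sym2 β, ¬z.IsDiag ∧ (∀ x ∈ s, x ∈ z) ∧ ∀ x ∈ z, x ∈ s ∨ x = p ∨ x = q := by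
  obtain h | h | h : #s = 0 ∨ #s = 1 ∨ #s = 2 := by omega
  · rw [card_eq_zero] at h
    subst h
    exact ⟨s(p, q), by simpa using hpq, by simp, by simp⟩
  · obtain ⟨a, rfl⟩ := card_eq_one.1 h
    by_cases ha : a = p
    · subst ha
      exact ⟨s(a, q), by simpa using hpq, by simp, by simp⟩
    · exact ⟨s(a, p), by simpa using ha, by simp, by simp⟩
  · obtain ⟨a, b, hab, rfl⟩ := card_eq_two.1 h
    exact ⟨s(a, b), by simpa using hab, by simp, by simp⟩

theorem Finset.card_sdiff_le_two {β : Type*} [DecidableEq β] {s t : Finset β} (hs : #s ≤ 3)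
    (hst : #s = 3 → ∃ x ∈ s, x ∈ t) : #(s \ t) ≤ 2 := by
  have hsplit := card_sdiff_add_card_inter s t
  by_cases h3 : #s = 3
  · obtain ⟨x, hxs, hxt⟩ := hst h3
    have : 0 < #(s ∩ t) := card_pos.2 ⟨x, mem_inter.2 ⟨hxs, hxt⟩⟩
    omega
  · omega

theorem card_edgeMembers_eq_one_iff {𝒬 : Finset (Finset α)} {u v : α} :
    #(edgeMembers 𝒬 s(u, v)) = 1 ↔ ∃! Q, Q ∈ 𝒬 ∧ u ∈ Q ∧ v ∈ Q := by
  simp [edgeMembers, card_eq_one_iff_existsUnique]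

theorem forall_card_edgeMembers_eq_one_iff {G : SimpleGraph α} {𝒬 : Finset (Finset α)} :
    (∀ e ∈ G.edgeSet, #(edgeMembers 𝒬 e) = 1) ↔
      ∀ u v, G.Adj u v → ∃! Q, Q ∈ 𝒬 ∧ u ∈ Q ∧ v ∈ Q := by
  simp only [Sym2.forall, mem_edgeSet, card_edgeMembers_eq_one_iff]

/-- `G ≅ CL(H, φ)` with `φ` proper, recorded as the edge `edge u` of `H` (a graph on `V`) and the
colour `color u` of each vertex `u` of `G`. -/
structure ProperColorLineModel (G : SimpleGraph α) (V C : Type) where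
  edge : α → Sym2 V
  color : α → C
  edge_injective : Function.Injective edge
  not_isDiag_edge : ∀ u, ¬(edge u).IsDiag
  adj_iff : ∀ u v, G.Adj u v ↔ u ≠ v ∧ ((∃ x, x ∈ edge u ∧ x ∈ edge v) ∨ color u = color v)
  color_ne : ∀ u v, u ≠ v → (∃ x, x ∈ edge u ∧ x ∈ edge v) → color u ≠ color v

omit [Fintype α] [DecidableEq α] in
theorem isProperColorLineGraph_iff_exists_model (G : SimpleGraph α) :
    IsProperColorLineGraph G ↔
      ∃ (V C : Type) (_ : Fintype V), Nonempty (ProperColorLineModel G V C) := by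
  constructor
  · rintro ⟨V, C, hV, H, φ, hφ, ⟨ι⟩⟩
    refine ⟨V, C, hV, ⟨fun u => ι u, fun u => φ (ι u), Subtype.val_injective.comp ι.injective,
      fun u => H.not_isDiag_of_mem_edgeSet (ι u).2, fun u v => ?_, fun u v huv => ?_⟩⟩
    · rw [← ι.map_adj_iff, ι.injective.ne_iff.symm]
      rfl
    · exact hφ (ι u) (ι v) (ι.injective.ne huv)
  · rintro ⟨V, C, hV, ⟨M⟩⟩
    let H := SimpleGraph.fromEdgeSet (Set.range M.edge)
    have hH : H.edgeSet = Set.range M.edge := by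
      rw [edgeSet_fromEdgeSet, sdiff_eq_left, Set.disjoint_left]
      rintro _ ⟨u, rfl⟩
      exact M.not_isDiag_edge u
    let e : α ≃ H.edgeSet :=
      (Equiv.ofInjective M.edge M.edge_injective).trans (Equiv.setCongr hH.symm)
    have he : ∀ u, (e u : Sym2 V) = M.edge u := fun _ => rfl
    refine ⟨V, C, hV, H, fun f => M.color (e.symm f), ?_, ⟨⟨e, fun {u v} => ?_⟩⟩⟩
    · intro f g hfg hshare
      obtain ⟨u, rfl⟩ := e.surjective f
      obtain ⟨v, rfl⟩ := e.surjective g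
      simpa using M.color_ne u v (e.injective.ne_iff.1 hfg) (by simpa only [he] using hshare)
    · simp only [colorLineGraph, he, e.injective.ne_iff, Equiv.symm_apply_apply]
      exact (M.adj_iff u v).symm

namespace ProperColorLineModel

variable {G : SimpleGraph α} {V C : Type} (M : ProperColorLineModel G V C)

omit [Fintype α] [DecidableEq α] in
theorem eq_of_mem_edge_of_ne {u v : α} (huv : u ≠ v) {a b : V} (hau : a ∈ M.edge u)
    (hav : a ∈ M.edge v) (hbu : b ∈ M.edge u) (hbv : b ∈ M.edge v) : a = b := by
  by_contra hab
  have hu := (Sym2.mem_and_mem_iff hab).1 ⟨hau, hbu⟩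
  have hv := (Sym2.mem_and_mem_iff hab).1 ⟨hav, hbv⟩
  exact huv (M.edge_injective (hu.trans hv.symm))

def star [DecidableEq V] (a : V) : Finset α := univ.filter (a ∈ M.edge ·)

def colorClass [DecidableEq C] (u : α) : Finset α := univ.filter (M.color · = M.color u)

def cliques [Fintype V] [DecidableEq V] [DecidableEq C] : Finset (Finset α) :=
  univ.image M.star ∪ univ.image M.colorClass

omit [DecidableEq α] in
@[simp] theorem mem_star [DecidableEq V] {a : V} {u : α} : u ∈ M.star a ↔ a ∈ M.edge u := by
  simp [star]

section colorClass

variable [DecidableEq C]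

omit [DecidableEq α] in
@[simp] theorem mem_colorClass {u v : α} : v ∈ M.colorClass u ↔ M.color v = M.color u := by
  simp [colorClass]

omit [DecidableEq α] in
theorem colorClass_eq {u v : α} (h : v ∈ M.colorClass u) : M.colorClass v = M.colorClass u := by
  rw [mem_colorClass] at h
  simp only [colorClass, h]

omit [DecidableEq α] in
theorem disjoint_colorClass {u v : α} (h : v ∉ M.colorClass u) :
    Disjoint (M.colorClass v) (M.colorClass u) := by
  rw [Finset.disjoint_left]
  intro w hv hu
  exact h (by simp_all)

variable [Fintype V] [DecidableEq V]

theorem mem_cliques {Q : Finset α} :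
    Q ∈ M.cliques ↔ (∃ a, M.star a = Q) ∨ ∃ u, M.colorClass u = Q := by
  simp [cliques]

theorem colorClass_mem_cliques (u : α) : M.colorClass u ∈ M.cliques :=
  M.mem_cliques.2 (Or.inr ⟨u, rfl⟩)

theorem isClique_of_mem_cliques {Q : Finset α} (hQ : Q ∈ M.cliques) : G.IsClique (Q : Set α) := by
  intro u hu v hv huv
  rw [M.adj_iff]
  obtain ⟨a, rfl⟩ | ⟨w, rfl⟩ := M.mem_cliques.1 hQ
  · exact ⟨huv, Or.inl ⟨a, by simpa using hu, by simpa using hv⟩⟩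
  · rw [mem_coe, mem_colorClass] at hu hv
    exact ⟨huv, Or.inr (hu.trans hv.symm)⟩

theorem card_vertMembers_cliques_le (u : α) : #(vertMembers M.cliques u) ≤ 3 := by
  induction hu : M.edge u using Sym2.ind with | h a b => ?_
  refine (card_le_card (t := {M.star a, M.star b, M.colorClass u}) fun Q hQ => ?_).trans
    card_le_three
  rw [vertMembers, mem_filter, mem_cliques] at hQ
  obtain ⟨⟨c, rfl⟩ | ⟨w, rfl⟩, hQu⟩ := hQ
  · rw [mem_star, hu, Sym2.mem_iff] at hQu
    rcases hQu with rfl | rfl <;> simp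
  · simp [M.colorClass_eq hQu]

theorem existsUnique_mem_cliques {u v : α} (h : G.Adj u v) :
    ∃! Q, Q ∈ M.cliques ∧ u ∈ Q ∧ v ∈ Q := by
  obtain ⟨huv, ⟨a, hau, hav⟩ | hcol⟩ := (M.adj_iff u v).1 h
  · refine ⟨M.star a, ⟨M.mem_cliques.2 (Or.inl ⟨a, rfl⟩), by simpa, by simpa⟩, ?_⟩
    rintro Q ⟨hQ, hu, hv⟩
    obtain ⟨b, rfl⟩ | ⟨w, rfl⟩ := M.mem_cliques.1 hQ
    · rw [mem_star] at hu hv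
      exact congrArg M.star (M.eq_of_mem_edge_of_ne huv hu hv hau hav)
    · rw [mem_colorClass] at hu hv
      exact absurd (hu.trans hv.symm) (M.color_ne u v huv ⟨a, hau, hav⟩)
  · refine ⟨M.colorClass u, ⟨M.colorClass_mem_cliques u, by simp, by simp [hcol]⟩, ?_⟩
    rintro Q ⟨hQ, hu, hv⟩
    obtain ⟨b, rfl⟩ | ⟨w, rfl⟩ := M.mem_cliques.1 hQ
    · exact absurd hcol (M.color_ne u v huv ⟨b, by simpa using hu, by simpa using hv⟩)
    · exact (M.colorClass_eq hu).symm

end colorClass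

end ProperColorLineModel

def designatedColor (D : Finset (Finset α)) (v : α) : Finset (Finset α) ⊕ α :=
  if (vertMembers D v).Nonempty then .inl (vertMembers D v) else .inr v

omit [Fintype α] in
theorem vertMembers_eq_singleton {D : Finset (Finset α)}
    (hD : (D : Set (Finset α)).PairwiseDisjoint id) {Q : Finset α} (hQ : Q ∈ D) {v : α}
    (hv : v ∈ Q) : vertMembers D v = {Q} := by
  ext Q'
  simp only [vertMembers, mem_filter, mem_singleton]
  exact ⟨fun h => hD.elim_finset h.1 hQ v h.2 hv, by rintro rfl; exact ⟨hQ, hv⟩⟩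

omit [Fintype α] in
theorem designatedColor_eq_iff {D : Finset (Finset α)}
    (hD : (D : Set (Finset α)).PairwiseDisjoint id) {u v : α} (huv : u ≠ v) :
    designatedColor D u = designatedColor D v ↔ ∃ Q ∈ D, u ∈ Q ∧ v ∈ Q := by
  constructor
  · intro h
    unfold designatedColor at h
    split_ifs at h with hu
    · obtain ⟨Q, hQu⟩ := hu
      have hQv := Sum.inl.inj h ▸ hQu
      simp only [vertMembers, mem_filter] at hQu hQv
      exact ⟨Q, hQu.1, hQu.2, hQv.2⟩
    all_goals simp_all
  · rintro ⟨Q, hQ, hu, hv⟩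
    simp [designatedColor, vertMembers_eq_singleton hD hQ hu, vertMembers_eq_singleton hD hQ hv]

omit [Fintype α] in
/-- Vertex `v` of `G` becomes an edge joining the members of `𝒬 \ D` through `v`, padded by the
private vertices `.inr (v, _)`. -/
theorem exists_sym2_common_mem_iff {𝒬 D : Finset (Finset α)}
    (hends : ∀ v, #(vertMembers 𝒬 v \ D) ≤ 2) :
    ∃ ε : α → Sym2 (Finset α ⊕ α × Bool), (∀ v, ¬(ε v).IsDiag) ∧
      ∀ u v, u ≠ v → ∀ x, x ∈ ε u ∧ x ∈ ε v ↔
        ∃ A ∈ vertMembers 𝒬 u \ D, A ∈ vertMembers 𝒬 v \ D ∧ x = .inl A := by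
  choose ε hdiag hsub hsup using fun v => Sym2.exists_not_isDiag_of_card_le_two
    (s := (vertMembers 𝒬 v \ D).map .inl) ((card_map _).trans_le (hends v))
    (p := .inr (v, false)) (q := .inr (v, true)) (by simp)
  refine ⟨ε, hdiag, fun u v huv x => ⟨?_, ?_⟩⟩
  · rintro ⟨hu, hv⟩
    obtain ⟨A, hAu, rfl⟩ : ∃ A ∈ vertMembers 𝒬 u \ D, x = .inl A := by
      rcases hsup u x hu with h | rfl | rfl
      · simpa [eq_comm] using h
      all_goals rcases hsup v _ hv with h | h | h <;> simp_all
    refine ⟨A, hAu, ?_, rfl⟩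
    rcases hsup v _ hv with h | h | h <;> simp_all
  · rintro ⟨A, hAu, hAv, rfl⟩
    exact ⟨hsub u _ (mem_map_of_mem _ hAu), hsub v _ (mem_map_of_mem _ hAv)⟩

theorem isProperColorLineGraph_of_cliqueCover {G : SimpleGraph α} {𝒬 D : Finset (Finset α)}
    (hclique : ∀ Q ∈ 𝒬, G.IsClique (Q : Set α))
    (hcover : ∀ u v, G.Adj u v → ∃! Q, Q ∈ 𝒬 ∧ u ∈ Q ∧ v ∈ Q)
    (hD𝒬 : D ⊆ 𝒬) (hD : (D : Set (Finset α)).PairwiseDisjoint id)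
    (hends : ∀ v, #(vertMembers 𝒬 v \ D) ≤ 2) : IsProperColorLineGraph G := by
  obtain ⟨ε, hdiag, hcommon⟩ := exists_sym2_common_mem_iff hends
  have hunique {u v : α} {A B : Finset α} (huv : u ≠ v) (hA : A ∈ 𝒬) (huA : u ∈ A) (hvA : v ∈ A)
      (hB : B ∈ 𝒬) (huB : u ∈ B) (hvB : v ∈ B) : A = B :=
    (hcover u v (hclique A hA huA hvA huv)).unique ⟨hA, huA, hvA⟩ ⟨hB, huB, hvB⟩
  have hshare {u v : α} (huv : u ≠ v) :
      (∃ x, x ∈ ε u ∧ x ∈ ε v) ↔ ∃ A ∈ 𝒬, A ∉ D ∧ u ∈ A ∧ v ∈ A := by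
    simp only [hcommon u v huv, vertMembers, mem_sdiff, mem_filter]
    aesop
  rw [isProperColorLineGraph_iff_exists_model]
  refine ⟨_, _, inferInstance, ⟨ε, designatedColor D, fun u v h => ?_, hdiag, fun u v => ?_,
    fun u v huv h hcol => ?_⟩⟩
  · by_contra huv
    induction hu : ε u using Sym2.ind with | h a b => ?_
    obtain ⟨A, hAu, hAv, rfl⟩ := (hcommon u v huv a).1 ⟨by simp [hu], by simp [← h, hu]⟩
    obtain ⟨B, hBu, hBv, rfl⟩ := (hcommon u v huv b).1 ⟨by simp [hu], by simp [← h, hu]⟩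
    simp only [vertMembers, mem_sdiff, mem_filter] at hAu hAv hBu hBv
    have hAB := hunique huv hAu.1.1 hAu.1.2 hAv.1.2 hBu.1.1 hBu.1.2 hBv.1.2
    exact hdiag u (by simp [hu, hAB])
  · by_cases huv : u = v
    · simp [huv]
    rw [hshare huv, designatedColor_eq_iff hD huv]
    constructor
    · intro h
      obtain ⟨A, ⟨hA, huA, hvA⟩, -⟩ := hcover u v h
      by_cases hAD : A ∈ D
      · exact ⟨huv, Or.inr ⟨A, hAD, huA, hvA⟩⟩
      · exact ⟨huv, Or.inl ⟨A, hA, hAD, huA, hvA⟩⟩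
    · rintro ⟨-, ⟨A, hA, -, huA, hvA⟩ | ⟨Q, hQ, huQ, hvQ⟩⟩
      · exact hclique A hA huA hvA huv
      · exact hclique Q (hD𝒬 hQ) huQ hvQ huv
  · obtain ⟨A, hA, hAD, huA, hvA⟩ := (hshare huv).1 h
    obtain ⟨Q, hQ, huQ, hvQ⟩ := (designatedColor_eq_iff hD huv).1 hcol
    exact hAD (hunique huv hA huA hvA (hD𝒬 hQ) huQ hvQ ▸ hQ)

/-- Krausz-type characterization for proper color-line graphs. -/
theorem krausz_properColorLine (G : SimpleGraph α) :
    IsProperColorLineGraph G ↔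
      ∃ 𝒬 : Finset (Finset α),
        -- every member of 𝒬 is a clique of G
        (∀ Q ∈ 𝒬, G.IsClique (Q : Set α)) ∧
        -- (a) every vertex in at most three members, every edge in exactly one member
        (∀ v : α, (vertMembers 𝒬 v).card ≤ 3) ∧
        (∀ e ∈ G.edgeSet, (edgeMembers 𝒬 e).card = 1) ∧
        -- (b) the map v ↦ QW v on W = vertices in exactly three members
        ∃ QW : α → Finset α,
          (∀ v : α, (vertMembers 𝒬 v).card = 3 →
            QW v ∈ 𝒬 ∧ v ∈ QW v) ∧
          (∀ u : α, (vertMembers 𝒬 u).card = 3 →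
            ∀ v : α, (vertMembers 𝒬 v).card = 3 →
              ((u ∈ QW v) → QW u = QW v) ∧
              ((u ∉ QW v) → Disjoint (QW u) (QW v))) := by
  constructor
  · rw [isProperColorLineGraph_iff_exists_model]
    rintro ⟨V, C, _, ⟨M⟩⟩
    classical
    exact ⟨M.cliques, fun _ => M.isClique_of_mem_cliques, M.card_vertMembers_cliques_le,
      forall_card_edgeMembers_eq_one_iff.2 fun _ _ => M.existsUnique_mem_cliques, M.colorClass,
      fun v _ => ⟨M.colorClass_mem_cliques v, by simp⟩,
      fun _ _ _ _ => ⟨M.colorClass_eq, M.disjoint_colorClass⟩⟩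
  · rintro ⟨𝒬, hclique, hcard, hedge, QW, hQW, hQWdisj⟩
    let W := univ.filter fun v => #(vertMembers 𝒬 v) = 3
    have hmemW {v : α} : v ∈ W ↔ #(vertMembers 𝒬 v) = 3 := by simp [W]
    refine isProperColorLineGraph_of_cliqueCover (D := W.image QW) hclique
      (forall_card_edgeMembers_eq_one_iff.1 hedge) ?_ ?_ fun v => card_sdiff_le_two (hcard v)
      fun hv => ⟨QW v, by simpa [vertMembers] using hQW v hv, mem_image_of_mem _ (hmemW.2 hv)⟩
    · simp only [subset_iff, mem_image, hmemW]
      rintro _ ⟨u, hu, rfl⟩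
      exact (hQW u hu).1
    · simp only [Set.PairwiseDisjoint, Set.Pairwise, coe_image, Set.forall_mem_image, mem_coe,
        hmemW]
      intro u hu v hv hne
      by_cases h : u ∈ QW v
      · exact absurd ((hQWdisj u hu v hv).1 h) hne
      · exact (hQWdisj u hu v hv).2 h
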